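/- arXiv:1706.05874 — 4 statements merged into one kernel-verified Lean document; each statement's English description precedes it below -/
import Mathlib

section
/- Let F be a field of characteristic zero. If f ∈ F[X] is a polynomial such that f(f(X)) = T₄(X), where T₄(X) = X⁴ - 4X² + 2 is the fourth Chebyshev polynomial, then f(X) = X² - 2 (that is, f equals the second Chebyshev polynomial T₂). -/
open Polynomial

/-- If `f ∘ f = T₄ = X⁴ - 4X² + 2` over a field of characteristic zero,
then `f = X² - 2 = T₂`. -/
theorem stmt_0 {F : Type*} [Field F] [CharZero F] (f : F[X])
    (h : f.comp f = X ^ 4 - 4 * X ^ 2 + 2) :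
    f = X ^ 2 - 2 := by
  have hd : f.natDegree = 2 := by
    have hr : (X ^ 4 - 4 * X ^ 2 + 2 : F[X]).natDegree = 4 := by compute_degree!
    have hdd := natDegree_comp (p := f) (q := f)
    rw [h, hr] at hdd
    nlinarith [f.natDegree]
  set a := f.coeff 2 with ha
  set b := f.coeff 1 with hb
  set c := f.coeff 0 with hc
  have hf : f = C a * X ^ 2 + C b * X + C c := by
    have := f.as_sum_range' 3 (by omega)
    rw [this]
    simp only [Finset.sum_range_succ, Finset.sum_range_zero, zero_add,
      ← C_mul_X_pow_eq_monomial]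
    ring
  rw [hf] at h
  simp only [add_comp, mul_comp, pow_comp, X_comp, C_comp] at h
  ring_nf at h
  have h2 : C (a^3) * X^4 + C (2*a^2*b) * X^3 + C (a*b^2 + 2*a^2*c + a*b) * X^2
      + C (2*a*b*c + b^2) * X + C (a*c^2 + b*c + c)
      = C 1 * X ^ 4 + C (-4) * X ^ 2 + C 2 := by
    simp only [C_mul, C_add, C_pow, C_neg, C_1, map_ofNat]
    linear_combination h
  have e4 := congrArg (fun p => p.coeff 4) h2
  have e3 := congrArg (fun p => p.coeff 3) h2
  have e2 := congrArg (fun p => p.coeff 2) h2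
  have e1 := congrArg (fun p => p.coeff 1) h2
  have e0 := congrArg (fun p => p.coeff 0) h2
  simp only [coeff_add, coeff_C_mul, coeff_X_pow, coeff_X, coeff_C] at e4 e3 e2 e1 e0
  norm_num at e4 e3 e2 e1 e0
  have ha0 : a ≠ 0 := by
    intro h0
    rw [h0] at e4
    norm_num at e4
  have hb0 : b = 0 := e3.resolve_left ha0
  rw [hb0] at e2 e0
  have hc1 : c = -2 * a := by
    linear_combination (a / 2) * e2 - c * e4
  rw [hc1] at e0
  have ha1 : a = 1 := by
    linear_combination (-1 / 2 : F) * e0 + 2 * e4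
  rw [hf, hb0, hc1, ha1]
  simp only [C_1, C_0, map_neg, map_ofNat, map_mul, map_one, mul_one]
  ring
end

section
/- Let φ₁ = X + 1, φ₂ = X - 1, φ₃ = 2(X² - 1) ∈ ℚ(X). Then φ₁, φ₂, φ₃ are multiplicatively independent (no nonzero integer exponent vector makes their product equal to 1 as a rational function), but they are not multiplicatively independent modulo constants (since φ₁·φ₂·φ₃^{-1} = 1/2 is constant). Moreover, for every integer m ≥ 2, setting α_m = 2^m - 1 one has φ₁(α_m)^{-(m+1)} · φ₂(α_m)^{-m} · φ₃(α_m)^{m} = 1. -/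
/-!
Since `φ₃ = 2 φ₁ φ₂`, a relation `φ₁^k₁ φ₂^k₂ φ₃^k₃ = 1` becomes
`(X + 1)^(k₁+k₃) (X - 1)^(k₂+k₃) 2^k₃ = 1`. Clearing denominators and comparing the root
multiplicities at `-1` and at `1` forces `k₁ + k₃ = k₂ + k₃ = 0`, and then `2^k₃ = 1` forces
`k₃ = 0`. The same factorisation turns the product at `x = α_m` into `2^m / (α_m + 1) = 1`;
`m ≥ 2` keeps `φ₂(α_m) = 2^m - 2` away from `0`.
-/

namespace Polynomial

variable {K : Type*} [Field K] {a b : K}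

theorem rootMultiplicity_C_mul_X_sub_C_pow_mul_X_sub_C_pow (hab : a ≠ b) {c : K} (hc : c ≠ 0)
    (i j : ℕ) : rootMultiplicity a (C c * ((X - C a) ^ i * (X - C b) ^ j)) = i := by
  have hne : (X - C a) ^ i * (X - C b) ^ j ≠ 0 :=
    mul_ne_zero (pow_ne_zero _ (X_sub_C_ne_zero a)) (pow_ne_zero _ (X_sub_C_ne_zero b))
  have hb : rootMultiplicity a ((X - C b) ^ j) = 0 :=
    rootMultiplicity_eq_zero (by simp [sub_ne_zero.mpr hab])
  rw [rootMultiplicity_mul (mul_ne_zero (C_ne_zero.mpr hc) hne), rootMultiplicity_mul hne,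
    rootMultiplicity_C, rootMultiplicity_X_sub_C_pow, hb, zero_add, add_zero]

theorem eq_and_eq_of_C_mul_X_sub_C_pow_mul_X_sub_C_pow_eq (hab : a ≠ b) {c c' : K}
    (hc : c ≠ 0) (hc' : c' ≠ 0) {i j i' j' : ℕ}
    (h : C c * ((X - C a) ^ i * (X - C b) ^ j) = C c' * ((X - C a) ^ i' * (X - C b) ^ j')) :
    i = i' ∧ j = j' := by
  constructor
  · simpa only [rootMultiplicity_C_mul_X_sub_C_pow_mul_X_sub_C_pow hab hc,
      rootMultiplicity_C_mul_X_sub_C_pow_mul_X_sub_C_pow hab hc'] using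
      congrArg (rootMultiplicity a) h
  · rw [mul_comm ((X - C a) ^ i), mul_comm ((X - C a) ^ i')] at h
    simpa only [rootMultiplicity_C_mul_X_sub_C_pow_mul_X_sub_C_pow hab.symm hc,
      rootMultiplicity_C_mul_X_sub_C_pow_mul_X_sub_C_pow hab.symm hc'] using
      congrArg (rootMultiplicity b) h

end Polynomial

namespace RatFunc

variable {K : Type*} [Field K]

theorem X_sub_C_ne_zero (a : K) : (X - C a : RatFunc K) ≠ 0 := by
  rw [← algebraMap_X, ← algebraMap_C, ← map_sub]
  exact algebraMap_ne_zero (Polynomial.X_sub_C_ne_zero a)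

theorem eq_zero_of_X_sub_C_zpow_mul_X_sub_C_zpow_mul_C_eq_one {a b c : K} (hab : a ≠ b)
    {i j : ℤ} (h : (X - C a) ^ i * (X - C b) ^ j * C c = 1) : i = 0 ∧ j = 0 ∧ c = 1 := by
  have hc : c ≠ 0 := by
    rintro rfl
    simp at h
  have hu := X_sub_C_ne_zero a
  have hv := X_sub_C_ne_zero b
  have hcleared : C c * ((X - C a) ^ i.toNat * (X - C b) ^ j.toNat)
      = C 1 * ((X - C a) ^ (-i).toNat * (X - C b) ^ (-j).toNat) := by
    rw [← Int.toNat_sub_toNat_neg i, ← Int.toNat_sub_toNat_neg j, zpow_sub₀ hu, zpow_sub₀ hv]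
      at h
    simp only [zpow_natCast] at h
    field_simp at h
    rw [map_one, one_mul]
    linear_combination h
  have hpoly : Polynomial.C c * ((Polynomial.X - Polynomial.C a) ^ i.toNat *
        (Polynomial.X - Polynomial.C b) ^ j.toNat)
      = Polynomial.C 1 * ((Polynomial.X - Polynomial.C a) ^ (-i).toNat *
        (Polynomial.X - Polynomial.C b) ^ (-j).toNat) := by
    apply algebraMap_injective K
    simpa only [map_mul, map_pow, map_sub, algebraMap_X, algebraMap_C] using hcleared
  obtain ⟨hi, hj⟩ :=
    Polynomial.eq_and_eq_of_C_mul_X_sub_C_pow_mul_X_sub_C_pow_eq hab hc one_ne_zero hpoly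
  obtain ⟨rfl, rfl⟩ : i = 0 ∧ j = 0 := by omega
  rw [zpow_zero, zpow_zero, one_mul, one_mul] at h
  exact ⟨rfl, rfl, (map_eq_one_iff C C_injective).mp h⟩

end RatFunc

theorem zpow_mul_zpow_mul_mul_mul_zpow {K : Type*} [Field K] {u v : K} (hu : u ≠ 0)
    (hv : v ≠ 0) (c : K) (k₁ k₂ k₃ : ℤ) :
    u ^ k₁ * v ^ k₂ * (c * (u * v)) ^ k₃ = u ^ (k₁ + k₃) * v ^ (k₂ + k₃) * c ^ k₃ := by
  rw [mul_zpow, mul_zpow, zpow_add₀ hu, zpow_add₀ hv]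
  ring

/-- For `φ₁ = X + 1`, `φ₂ = X - 1`, `φ₃ = 2(X² - 1)` in `ℚ(X)`:
(1) they are multiplicatively independent;
(2) they are not multiplicatively independent modulo constants, since
    `φ₁ · φ₂ · φ₃⁻¹ = 1/2`;
(3) for every `m ≥ 2`, with `α_m = 2^m - 1`,
    `φ₁(α_m)^{-(m+1)} · φ₂(α_m)^{-m} · φ₃(α_m)^m = 1`. -/
theorem stmt_4 :
    (∀ k₁ k₂ k₃ : ℤ,
        (RatFunc.X + 1 : RatFunc ℚ) ^ k₁ * (RatFunc.X - 1) ^ k₂ *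
          (2 * (RatFunc.X ^ 2 - 1)) ^ k₃ = 1 →
        k₁ = 0 ∧ k₂ = 0 ∧ k₃ = 0) ∧
    ((RatFunc.X + 1 : RatFunc ℚ) ^ (1 : ℤ) * (RatFunc.X - 1) ^ (1 : ℤ) *
        (2 * (RatFunc.X ^ 2 - 1)) ^ (-1 : ℤ) = RatFunc.C (1 / 2)) ∧
    (∀ m : ℕ, 2 ≤ m →
      ((2 ^ m - 1 : ℚ) + 1) ^ (-(m + 1 : ℤ)) * ((2 ^ m - 1 : ℚ) - 1) ^ (-(m : ℤ)) *
        (2 * ((2 ^ m - 1 : ℚ) ^ 2 - 1)) ^ (m : ℤ) = 1) := by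
  have hφ₁ : (RatFunc.X + 1 : RatFunc ℚ) = RatFunc.X - RatFunc.C (-1) := by simp
  have hφ₂ : (RatFunc.X - 1 : RatFunc ℚ) = RatFunc.X - RatFunc.C 1 := by simp
  have hu : (RatFunc.X + 1 : RatFunc ℚ) ≠ 0 := hφ₁ ▸ RatFunc.X_sub_C_ne_zero _
  have hv : (RatFunc.X - 1 : RatFunc ℚ) ≠ 0 := hφ₂ ▸ RatFunc.X_sub_C_ne_zero _
  refine ⟨fun k₁ k₂ k₃ h => ?_, ?_, fun m hm => ?_⟩
  · rw [sq, mul_self_sub_one, zpow_mul_zpow_mul_mul_mul_zpow hu hv, hφ₁, hφ₂,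
      ← map_ofNat RatFunc.C 2, ← map_zpow₀] at h
    obtain ⟨h₁, h₂, h₃⟩ := RatFunc.eq_zero_of_X_sub_C_zpow_mul_X_sub_C_zpow_mul_C_eq_one
      (by norm_num) h
    obtain rfl : k₃ = 0 := (zpow_eq_one_iff_right₀ zero_le_two (by norm_num)).mp h₃
    omega
  · rw [sq, mul_self_sub_one, zpow_one, zpow_one, zpow_neg_one, map_div₀, map_one, map_ofNat]
    field_simp
  · have hx : (2 ^ m - 1 : ℚ) - 1 ≠ 0 := by
      have : (2 : ℚ) ^ 2 ≤ 2 ^ m := pow_le_pow_right₀ one_le_two hm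
      linarith
    rw [sq, mul_self_sub_one,
      zpow_mul_zpow_mul_mul_mul_zpow (by rw [sub_add_cancel]; positivity) hx]
    simp
end

section
/- Let φ ∈ ℚ̄(X) be a nonconstant rational function that is not of the form c·(ℓ(X))^m for a linear fractional function ℓ and constant c (i.e., φ is not a power of a linear fractional function up to the group action). Then there is no rational function S ∈ ℚ̄(Y), no b ∈ ℚ̄*, and no integer m ≥ 1 such that φ(S(Y)) = b·Y^m. -/
/-!
Write `φ = P / Q` and `S = s / t` in lowest terms and let `n = max (deg P) (deg Q)`.
Homogenizing to degree `n`, the identity `φ(S) = b Y^m` becomes `F(s, t) = b Y^m G(s, t)`, where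
the binary forms `F` and `G` are products of linear forms vanishing at disjoint points of `ℙ¹`.
As `s` and `t` are coprime, so are `F(s, t)` and `G(s, t)`; hence `G(s, t)` is a constant and
`F(s, t) = c Y^m`. So each linear factor of `G` takes a constant value at `(s, t)`, and each linear
factor of `F` a constant value or a multiple of `Y`. Two linear forms vanishing at distinct points
span the same space as `s` and `t`, so they cannot both be constant at `(s, t)` (then `S` would be
constant, contradicting `m ≥ 1`) nor both divisible by `Y` (as `s`, `t` are coprime). Therefore
`F = ℓ₁ⁿ` and `G = ℓ₂ⁿ` up to constants, i.e. `φ = k (ℓ₁ / ℓ₂)ⁿ`.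
-/

open Polynomial

theorem Submodule.mem_and_mem_of_smul_add_smul_mem {K V : Type*} [Field K] [AddCommGroup V]
    [Module K V] (M : Submodule K V) {a b c d : K} (hdet : a * d - b * c ≠ 0) {s t : V}
    (h₁ : a • s + b • t ∈ M) (h₂ : c • s + d • t ∈ M) : s ∈ M ∧ t ∈ M := by
  have hs : s = (a * d - b * c)⁻¹ • (d • (a • s + b • t) - b • (c • s + d • t)) := by
    match_scalars
    · field_simp
    · ring
  have ht : t = (a * d - b * c)⁻¹ • (a • (c • s + d • t) - c • (a • s + b • t)) := by
    match_scalars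
    · field_simp
    · ring
  constructor
  · rw [hs]; exact M.smul_mem _ (M.sub_mem (M.smul_mem _ h₁) (M.smul_mem _ h₂))
  · rw [ht]; exact M.smul_mem _ (M.sub_mem (M.smul_mem _ h₂) (M.smul_mem _ h₁))

theorem Prime.isUnit_or_dvd_of_dvd_pow {M : Type*} [CommMonoidWithZero M] [IsCancelMulZero M]
    {p d : M} (hp : Prime p) {m : ℕ} (h : d ∣ p ^ m) : IsUnit d ∨ p ∣ d := by
  obtain ⟨i, -, hi⟩ := (dvd_prime_pow hp m).mp h
  rcases i with _ | i
  · exact .inl (associated_one_iff_isUnit.mp (by simpa using hi))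
  · exact .inr ((dvd_pow_self p i.succ_ne_zero).trans hi.symm.dvd)

variable {K : Type*} [Field K]

/-- Points of `ℙ¹` are encoded as `Option K`, with `none` the point at infinity; `linCoeffs p` are
the coefficients of the linear form `(s, t) ↦ a s + b t` vanishing at `p`. -/
def linCoeffs : Option K → K × K
  | some r => (1, -r)
  | none => (0, 1)

theorem linCoeffs_det_ne_zero {p q : Option K} (h : p ≠ q) :
    (linCoeffs p).1 * (linCoeffs q).2 - (linCoeffs p).2 * (linCoeffs q).1 ≠ 0 := by
  rcases p with _ | r <;> rcases q with _ | r' <;> simp_all [linCoeffs, neg_add_eq_zero, eq_comm]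

def linForm {A : Type*} [AddCommGroup A] [Module K A] (s t : A) (p : Option K) : A :=
  (linCoeffs p).1 • s + (linCoeffs p).2 • t

section Module

variable {A : Type*} [AddCommGroup A] [Module K A] {s t : A}

theorem mem_and_mem_of_linForm_mem (M : Submodule K A) {p q : Option K} (hpq : p ≠ q)
    (hp : linForm s t p ∈ M) (hq : linForm s t q ∈ M) : s ∈ M ∧ t ∈ M :=
  M.mem_and_mem_of_smul_add_smul_mem (linCoeffs_det_ne_zero hpq) hp hq

theorem subsingleton_setOf_linForm_mem {M : Submodule K A} (h : ¬(s ∈ M ∧ t ∈ M)) :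
    {p : Option K | linForm s t p ∈ M}.Subsingleton := fun _ hp _ hq ↦
  by_contra fun hpq ↦ h (mem_and_mem_of_linForm_mem M hpq hp hq)

end Module

theorem isCoprime_linForm {A : Type*} [CommRing A] [Algebra K A] {s t : A} (hst : IsCoprime s t)
    {p q : Option K} (hpq : p ≠ q) : IsCoprime (linForm s t p) (linForm s t q) := by
  obtain ⟨hs, ht⟩ := mem_and_mem_of_linForm_mem
    ((Ideal.span {linForm s t p, linForm s t q}).restrictScalars K) hpq
    (Ideal.subset_span (Set.mem_insert _ _)) (Ideal.subset_span (Set.mem_insert_of_mem _ rfl))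
  obtain ⟨u, v, huv⟩ := hst
  exact Ideal.mem_span_pair.mp
    (huv ▸ Ideal.add_mem _ (Ideal.mul_mem_left _ u hs) (Ideal.mul_mem_left _ v ht))

/-- The zeros on `ℙ¹` of `P` seen as a binary form of degree `n`: its roots, and `∞` with
multiplicity `n - deg P`. -/
noncomputable def projRoots (P : K[X]) (n : ℕ) : Multiset (Option K) :=
  P.roots.map some + Multiset.replicate (n - P.natDegree) none

theorem card_projRoots [IsAlgClosed K] {P : K[X]} {n : ℕ} (hP : P.natDegree ≤ n) :
    Multiset.card (projRoots P n) = n := by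
  rw [projRoots, Multiset.card_add, Multiset.card_map, Multiset.card_replicate,
    splits_iff_card_roots.mp (IsAlgClosed.splits P)]
  omega

theorem disjoint_projRoots_max {P Q : K[X]} (hPQ : IsCoprime P Q) :
    Disjoint (projRoots P (max P.natDegree Q.natDegree))
      (projRoots Q (max P.natDegree Q.natDegree)) := by
  refine Multiset.disjoint_left.mpr fun {p} hP hQ ↦ ?_
  rcases p with _ | r <;> simp [projRoots, Multiset.mem_replicate] at hP hQ
  · omega
  · obtain ⟨u, v, huv⟩ := hPQ
    simpa [hP.2, hQ.2] using congrArg (eval r) huv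

section homEval

variable {A : Type*} [CommRing A] [Algebra K A]

/-- For split `P`, this is the degree-`n` homogenization of `P` evaluated at `(s, t)`. -/
noncomputable def homEval (P : K[X]) (n : ℕ) (s t : A) : A :=
  P.leadingCoeff • ((projRoots P n).map (linForm s t)).prod

theorem map_homEval {B : Type*} [CommRing B] [Algebra K B] (f : A →ₐ[K] B) (P : K[X]) (n : ℕ)
    (s t : A) : f (homEval P n s t) = homEval P n (f s) (f t) := by
  rw [homEval, homEval, map_smul, map_multiset_prod, Multiset.map_map]
  congr 3
  ext p
  simp [linForm]

theorem homEval_mul_self [IsAlgClosed K] {P : K[X]} {n : ℕ} (hP : P.natDegree ≤ n) (x t : A) :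
    homEval P n (x * t) t = aeval x P * t ^ n := by
  have hlin (r : K) : linForm (x * t) t (some r) = (x - algebraMap K A r) * t := by
    simp [linForm, linCoeffs, Algebra.smul_def]
    ring
  conv_rhs => rw [(IsAlgClosed.splits P).eq_prod_roots]
  simp only [homEval, projRoots, Multiset.map_add, Multiset.map_map, Function.comp_def, hlin,
    Multiset.prod_add, Multiset.prod_map_mul, Multiset.map_const', Multiset.prod_replicate,
    Multiset.map_replicate, map_mul, aeval_C, map_multiset_prod, map_sub, aeval_X]
  rw [splits_iff_card_roots.mp (IsAlgClosed.splits P), Algebra.smul_def, linForm]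
  simp only [linCoeffs, zero_smul, one_smul, zero_add, mul_assoc, ← pow_add]
  rw [Nat.add_sub_cancel' hP]

theorem aeval_eq_smul_linForm_pow [IsAlgClosed K] {P : K[X]} {n : ℕ} (hP : P.natDegree ≤ n)
    {α : Option K} (hα : ∀ p ∈ projRoots P n, p = α) (x : A) :
    aeval x P = P.leadingCoeff • linForm x 1 α ^ n := by
  have h := homEval_mul_self hP x 1
  rw [mul_one, one_pow, mul_one] at h
  rw [← h, homEval, Multiset.eq_replicate.mpr ⟨card_projRoots hP, hα⟩, Multiset.map_replicate,
    Multiset.prod_replicate]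

theorem linForm_dvd_homEval {P : K[X]} {n : ℕ} {p : Option K} (hp : p ∈ projRoots P n)
    (s t : A) : linForm s t p ∣ homEval P n s t := by
  rw [homEval, Algebra.smul_def]
  exact (Multiset.dvd_prod (Multiset.mem_map_of_mem _ hp)).mul_left _

theorem isCoprime_homEval {P Q : K[X]} {n : ℕ} (hP : P ≠ 0) (hQ : Q ≠ 0)
    (hdisj : Disjoint (projRoots P n) (projRoots Q n)) {s t : A} (hst : IsCoprime s t) :
    IsCoprime (homEval P n s t) (homEval Q n s t) := by
  have hunit {R : K[X]} (hR : R ≠ 0) : IsUnit (algebraMap K A R.leadingCoeff) :=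
    (isUnit_iff_ne_zero.mpr (leadingCoeff_ne_zero.mpr hR)).map _
  rw [homEval, homEval, Algebra.smul_def, Algebra.smul_def,
    isCoprime_mul_unit_left_left (hunit hP), isCoprime_mul_unit_left_right (hunit hQ)]
  refine Multiset.prod_induction (IsCoprime · _) _ (fun _ _ ↦ IsCoprime.mul_left)
    isCoprime_one_left fun _ hx ↦ ?_
  obtain ⟨p, hp, rfl⟩ := Multiset.mem_map.mp hx
  refine Multiset.prod_induction _ _ (fun _ _ ↦ IsCoprime.mul_right) isCoprime_one_right
    fun _ hy ↦ ?_
  obtain ⟨q, hq, rfl⟩ := Multiset.mem_map.mp hy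
  exact isCoprime_linForm hst fun h ↦ Multiset.disjoint_left.mp hdisj hp (h ▸ hq)

end homEval

section Polynomial

variable {P Q s t : K[X]} {n : ℕ}

theorem linForm_mem_bot_of_isUnit_homEval (h : IsUnit (homEval Q n s t)) {q : Option K}
    (hq : q ∈ projRoots Q n) : linForm s t q ∈ (⊥ : Subalgebra K K[X]) := by
  obtain ⟨r, -, hr⟩ := isUnit_iff.mp (isUnit_of_dvd_unit (linForm_dvd_homEval hq s t) h)
  exact Algebra.mem_bot.mpr ⟨r, hr⟩

theorem linForm_mem_bot_or_X_dvd {c : K} {m : ℕ} (hc : c ≠ 0)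
    (h : homEval P n s t = C c * X ^ m) {p : Option K} (hp : p ∈ projRoots P n) :
    linForm s t p ∈ (⊥ : Subalgebra K K[X]) ∨ X ∣ linForm s t p := by
  have hdvd := linForm_dvd_homEval hp s t
  rw [h, (isUnit_C.mpr (isUnit_iff_ne_zero.mpr hc)).dvd_mul_left] at hdvd
  refine (prime_X.isUnit_or_dvd_of_dvd_pow hdvd).imp_left fun hunit ↦ ?_
  obtain ⟨r, -, hr⟩ := isUnit_iff.mp hunit
  exact Algebra.mem_bot.mpr ⟨r, hr⟩

theorem homEval_mem_bot (hs : s ∈ (⊥ : Subalgebra K K[X])) (ht : t ∈ (⊥ : Subalgebra K K[X])) :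
    homEval P n s t ∈ (⊥ : Subalgebra K K[X]) := by
  refine Subalgebra.smul_mem _ (Subalgebra.multiset_prod_mem _ fun _ hx ↦ ?_) _
  obtain ⟨p, -, rfl⟩ := Multiset.mem_map.mp hx
  exact add_mem (Subalgebra.smul_mem _ hs _) (Subalgebra.smul_mem _ ht _)

theorem exists_forall_mem_projRoots_eq [IsAlgClosed K] {c : K} {m : ℕ} (hc : c ≠ 0) (hm : 1 ≤ m)
    (hP0 : P ≠ 0) (hQ0 : Q ≠ 0) (hPn : P.natDegree ≤ n) (hQn : Q.natDegree ≤ n)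
    (hdisj : Disjoint (projRoots P n) (projRoots Q n)) (hst : IsCoprime s t)
    (h : homEval P n s t = C c * X ^ m * homEval Q n s t) :
    ∃ α β : Option K, α ≠ β ∧ (∀ p ∈ projRoots P n, p = α) ∧ ∀ q ∈ projRoots Q n, q = β := by
  let M₀ := Subalgebra.toSubmodule (⊥ : Subalgebra K K[X])
  let M₁ := (Ideal.span {(X : K[X])}).restrictScalars K
  have hQu : IsUnit (homEval Q n s t) := (isCoprime_homEval hP0 hQ0 hdisj hst).symm.isUnit_of_dvd
    ⟨C c * X ^ m, by rw [h, mul_comm]⟩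
  obtain ⟨u, hu, hQu'⟩ := isUnit_iff.mp hQu
  have hP : homEval P n s t = C (c * u) * X ^ m := by rw [h, ← hQu', C_mul]; ring
  have hcu : c * u ≠ 0 := mul_ne_zero hc hu.ne_zero
  have hcard : Multiset.card (projRoots P n) = Multiset.card (projRoots Q n) := by
    rw [card_projRoots hPn, card_projRoots hQn]
  rcases (projRoots Q n).empty_or_exists_mem with hQ | ⟨β, hβ⟩
  · rw [hQ, Multiset.card_zero, Multiset.card_eq_zero] at hcard
    exact ⟨none, some 0, by simp, by simp [hcard], by simp [hQ]⟩
  obtain ⟨α, hα⟩ := Multiset.card_pos_iff_exists_mem.mp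
    (hcard ▸ Multiset.card_pos_iff_exists_mem.mpr ⟨β, hβ⟩)
  have hst₀ : ¬(s ∈ M₀ ∧ t ∈ M₀) := fun ⟨hs, ht⟩ ↦ by
    obtain ⟨r, hr⟩ := Algebra.mem_bot.mp (homEval_mem_bot (P := P) (n := n) hs ht)
    have := congrArg natDegree (hr.trans hP)
    rw [algebraMap_eq, natDegree_C, natDegree_C_mul_X_pow _ _ hcu] at this
    omega
  have hst₁ : ¬(s ∈ M₁ ∧ t ∈ M₁) := fun ⟨hs, ht⟩ ↦ not_isUnit_X
    (hst.isUnit_of_dvd' (Ideal.mem_span_singleton.mp hs) (Ideal.mem_span_singleton.mp ht))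
  have hQ₀ (q) (hq : q ∈ projRoots Q n) : linForm s t q ∈ M₀ :=
    linForm_mem_bot_of_isUnit_homEval hQu hq
  have hP₁ (p) (hp : p ∈ projRoots P n) : linForm s t p ∈ M₁ := by
    refine Ideal.mem_span_singleton.mpr
      ((linForm_mem_bot_or_X_dvd hcu hP hp).resolve_left fun h₀ ↦ ?_)
    exact Multiset.disjoint_left.mp hdisj hp
      (subsingleton_setOf_linForm_mem hst₀ (M := M₀) h₀ (hQ₀ β hβ) ▸ hβ)
  exact ⟨α, β, fun h ↦ Multiset.disjoint_left.mp hdisj hα (h ▸ hβ),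
    fun p hp ↦ subsingleton_setOf_linForm_mem hst₁ (hP₁ p hp) (hP₁ α hα),
    fun q hq ↦ subsingleton_setOf_linForm_mem hst₀ (hQ₀ q hq) (hQ₀ β hβ)⟩

end Polynomial

theorem RatFunc.algebraMap_eq_aeval_X (P : K[X]) :
    algebraMap K[X] (RatFunc K) P = aeval RatFunc.X P := by
  rw [← RatFunc.algebraMap_X, aeval_algebraMap_apply, aeval_X_left_apply]

theorem RatFunc.linForm_X_one (p : Option K) : linForm (RatFunc.X : RatFunc K) 1 p =
    RatFunc.C (linCoeffs p).1 * RatFunc.X + RatFunc.C (linCoeffs p).2 := by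
  simp [linForm, Algebra.smul_def, RatFunc.algebraMap_eq_C]

theorem homEval_num_eq_of_eval_eq [IsAlgClosed K] {φ S : RatFunc K} {b : K} {m n : ℕ}
    (hb : b ≠ 0) (hnum : φ.num.natDegree ≤ n) (hdenom : φ.denom.natDegree ≤ n)
    (h : φ.eval RatFunc.C S = RatFunc.C b * RatFunc.X ^ m) :
    homEval φ.num n S.num S.denom = C b * X ^ m * homEval φ.denom n S.num S.denom := by
  have hS : algebraMap K[X] (RatFunc K) S.num = S * algebraMap K[X] (RatFunc K) S.denom := by
    rw [← div_eq_iff (RatFunc.algebraMap_ne_zero S.denom_ne_zero), S.num_div_denom]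
  have hmap {P : K[X]} (hP : P.natDegree ≤ n) :
      algebraMap K[X] (RatFunc K) (homEval P n S.num S.denom)
        = aeval S P * algebraMap K[X] (RatFunc K) S.denom ^ n := by
    rw [← IsScalarTower.toAlgHom_apply K, map_homEval, IsScalarTower.toAlgHom_apply,
      IsScalarTower.toAlgHom_apply, hS, homEval_mul_self hP]
  rw [RatFunc.eval, ← RatFunc.algebraMap_eq_C, ← aeval_def, ← aeval_def] at h
  have hden : aeval S φ.denom ≠ 0 := fun h0 ↦ by
    rw [h0, div_zero] at h
    exact mul_ne_zero ((_root_.map_ne_zero _).mpr hb) (pow_ne_zero _ RatFunc.X_ne_zero) h.symm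
  apply RatFunc.algebraMap_injective K
  rw [map_mul, hmap hnum, hmap hdenom, (div_eq_iff hden).mp h, map_mul, map_pow,
    RatFunc.algebraMap_C, RatFunc.algebraMap_X, RatFunc.algebraMap_eq_C]
  ring

theorem stmt_5_general (φ : RatFunc (AlgebraicClosure ℚ))
    (hnp : ¬ ∃ (k a b c d : AlgebraicClosure ℚ) (m : ℕ), a * d - b * c ≠ 0 ∧
      φ = RatFunc.C k * ((RatFunc.C a * RatFunc.X + RatFunc.C b) /
        (RatFunc.C c * RatFunc.X + RatFunc.C d)) ^ m) :
    ¬ ∃ (S : RatFunc (AlgebraicClosure ℚ)) (b : AlgebraicClosure ℚ) (m : ℕ),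
      b ≠ 0 ∧ 1 ≤ m ∧ φ.eval (RatFunc.C) S = RatFunc.C b * RatFunc.X ^ m := by
  rintro ⟨S, b, m, hb, hm, heq⟩
  have hφ : φ ≠ 0 := fun h ↦ hnp ⟨0, 1, 0, 0, 1, 0, by norm_num, by simp [h]⟩
  set n := max φ.num.natDegree φ.denom.natDegree
  have hnum : φ.num.natDegree ≤ n := le_max_left _ _
  have hdenom : φ.denom.natDegree ≤ n := le_max_right _ _
  obtain ⟨α, β, hαβ, hα, hβ⟩ := exists_forall_mem_projRoots_eq hb hm (RatFunc.num_ne_zero hφ)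
    φ.denom_ne_zero hnum hdenom (disjoint_projRoots_max φ.isCoprime_num_denom)
    S.isCoprime_num_denom (homEval_num_eq_of_eval_eq hb hnum hdenom heq)
  refine hnp ⟨φ.num.leadingCoeff / φ.denom.leadingCoeff, (linCoeffs α).1, (linCoeffs α).2,
    (linCoeffs β).1, (linCoeffs β).2, n, linCoeffs_det_ne_zero hαβ, ?_⟩
  conv_lhs => rw [← φ.num_div_denom]
  rw [RatFunc.algebraMap_eq_aeval_X, RatFunc.algebraMap_eq_aeval_X,
    aeval_eq_smul_linForm_pow hnum hα, aeval_eq_smul_linForm_pow hdenom hβ, RatFunc.linForm_X_one,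
    RatFunc.linForm_X_one, Algebra.smul_def, Algebra.smul_def, RatFunc.algebraMap_eq_C, map_div₀,
    div_pow]
  ring

/-- Let `φ ∈ ℚ̄(X)` be a nonconstant rational function which is not of the form
`c · ℓ(X)^m` for a linear fractional function `ℓ` and a constant `c`. Then there is no
rational function `S ∈ ℚ̄(Y)`, no `b ∈ ℚ̄*` and no `m ≥ 1` with `φ(S(Y)) = b · Y^m`. -/
theorem stmt_5 (φ : RatFunc (AlgebraicClosure ℚ))
    (hnc : ∀ k : AlgebraicClosure ℚ, φ ≠ RatFunc.C k)
    (hnp : ¬ ∃ (k a b c d : AlgebraicClosure ℚ) (m : ℕ), a * d - b * c ≠ 0 ∧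
      φ = RatFunc.C k * ((RatFunc.C a * RatFunc.X + RatFunc.C b) /
        (RatFunc.C c * RatFunc.X + RatFunc.C d)) ^ m) :
    ¬ ∃ (S : RatFunc (AlgebraicClosure ℚ)) (b : AlgebraicClosure ℚ) (m : ℕ),
      b ≠ 0 ∧ 1 ≤ m ∧ φ.eval (RatFunc.C) S = RatFunc.C b * RatFunc.X ^ m :=
  stmt_5_general φ hnp
end

section
/- Let F be a field of characteristic zero and f ∈ F[X] a polynomial of degree at least 2 that is not a monomial (not of the form c·X^e). Then for every n ≥ 1, the iterates f^{(1)}, f^{(2)}, …, f^{(n)} are multiplicatively independent modulo constants: there is no nonzero integer vector (k₁,…,k_n) with (f^{(1)})^{k₁}⋯(f^{(n)})^{k_n} ∈ F*. -/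
/-!
Pass to an algebraic closure, let `m` be the largest index with `k m ≠ 0`, and pick a point `α`
whose orbit first hits `0` at time `m`. Then `f^{(m)}` is the only factor of the product
vanishing at `α`, so after clearing denominators exactly one side of `N = c • D` vanishes at `α`,
a contradiction.

Such an `α` is obtained by pulling `0` back `m` times along preimages different from `0`. If all
preimages of a value `γ` equal `z`, then `f = a (X - z)^d + γ`; in characteristic zero `z` is
then the unique critical point of `f`, so this can only block the construction when
`f = a X^d + f(0)`, and there it suffices to avoid the value `f(0)` along the way.
-/

open Polynomial

namespace Function

theorem exists_iterate_eq_and_iterate_ne_of_lt {α : Type*} {g : α → α} {z : α} {S : Set α}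
    (hz : z ∈ S) (hS : ∀ y ∈ S, ∃ x ∈ S, x ≠ z ∧ g x = y) (m : ℕ) :
    ∃ x, g^[m] x = z ∧ ∀ t < m, g^[t] x ≠ z := by
  suffices ∃ x ∈ S, g^[m] x = z ∧ ∀ t < m, g^[t] x ≠ z by
    obtain ⟨x, -, hx⟩ := this
    exact ⟨x, hx⟩
  induction m with
  | zero => exact ⟨z, hz, rfl, fun t ht => absurd ht t.not_lt_zero⟩
  | succ m ih =>
    obtain ⟨y, hyS, hym, hyt⟩ := ih
    obtain ⟨x, hxS, hxz, rfl⟩ := hS y hyS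
    refine ⟨x, hxS, by rwa [iterate_succ_apply], fun t ht => ?_⟩
    cases t with
    | zero => exact hxz
    | succ t => rw [iterate_succ_apply]; exact hyt t (by omega)

end Function

namespace Polynomial

theorem exists_eq_C_mul_X_pow_of_map {R S : Type*} [Semiring R] [Semiring S] {φ : R →+* S}
    (hφ : Function.Injective φ) {f : R[X]} (h : ∃ c e, f.map φ = C c * X ^ e) :
    ∃ c e, f = C c * X ^ e := by
  simp_rw [C_mul_X_pow_eq_monomial] at h ⊢
  rw [exists_comm, ← card_support_le_one_iff_monomial] at h ⊢
  rwa [support_map_of_injective _ hφ] at h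

theorem eq_of_C_mul_X_sub_C_pow_add_C_eq {R : Type*} [CommRing R] [IsDomain R] [CharZero R]
    {d : ℕ} (hd : 2 ≤ d) {a b u w v y : R} (ha : a ≠ 0)
    (h : C a * (X - C u) ^ d + C v = C b * (X - C w) ^ d + C y) : u = w := by
  have hd1 : d - 1 ≠ 0 := by omega
  have h' := congrArg (fun q => (derivative q).eval w) h
  simpa [derivative_X_sub_C_pow, zero_pow hd1, hd1, ha, sub_eq_zero, eq_comm (a := w),
    show d ≠ 0 by omega] using h'

theorem eq_C_mul_X_sub_C_pow_add_C_of_forall_eval_eq {K : Type*} [Field K] [IsAlgClosed K]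
    {f : K[X]} (hf : 0 < f.natDegree) {γ z : K} (h : ∀ x, f.eval x = γ → x = z) :
    f = C f.leadingCoeff * (X - C z) ^ f.natDegree + C γ := by
  have hg : f - C γ ≠ 0 := ne_zero_of_natDegree_gt (n := 0) (by rwa [natDegree_sub_C])
  have hroots : (f - C γ).roots = Multiset.replicate (f - C γ).natDegree z :=
    Multiset.eq_replicate.2 ⟨IsAlgClosed.card_roots_eq_natDegree, fun x hx =>
      h x (by simpa [sub_eq_zero] using (mem_roots hg).1 hx)⟩
  have hlc : (f - C γ).leadingCoeff = f.leadingCoeff :=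
    leadingCoeff_sub_of_degree_lt (degree_C_le.trans_lt (natDegree_pos_iff_degree_pos.1 hf))
  have := C_leadingCoeff_mul_prod_multiset_X_sub_C (p := f - C γ)
    IsAlgClosed.card_roots_eq_natDegree
  rw [hroots, Multiset.map_replicate, Multiset.prod_replicate, natDegree_sub_C, hlc] at this
  rw [this, sub_add_cancel]

theorem exists_zero_mem_and_forall_exists_ne_zero_eval_eq {K : Type*} [Field K] [IsAlgClosed K]
    [CharZero K] {f : K[X]} (hd : 2 ≤ f.natDegree) (hmono : ¬ ∃ c e, f = C c * X ^ e) :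
    ∃ S : Set K, 0 ∈ S ∧ ∀ γ ∈ S, ∃ α ∈ S, α ≠ 0 ∧ f.eval α = γ := by
  have hd0 : 0 < f.natDegree := by omega
  have ha : f.leadingCoeff ≠ 0 := leadingCoeff_ne_zero.2 (ne_zero_of_natDegree_gt hd0)
  by_cases hB : f = C f.leadingCoeff * (X - C 0) ^ f.natDegree + C (f.eval 0)
  · have hv : f.eval 0 ≠ 0 := fun hv => hmono ⟨_, _, by simpa [hv] using hB⟩
    -- `0` is the only preimage of `f(0)`, so the pull-backs must avoid `f(0)`.
    refine ⟨{f.eval 0}ᶜ, hv.symm, fun γ hγ => ?_⟩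
    by_contra! hcon
    have hf := eq_C_mul_X_sub_C_pow_add_C_of_forall_eval_eq hd0 (γ := γ) (z := f.eval 0)
      fun x hx => by
        by_contra hxv
        refine hcon x hxv ?_ hx
        rintro rfl
        exact hγ hx.symm
    have hcentre : (0 : K) = f.eval 0 := eq_of_C_mul_X_sub_C_pow_add_C_eq hd ha
      (b := f.leadingCoeff) (v := f.eval 0) (y := γ) (hB.symm.trans hf)
    exact hv hcentre.symm
  · refine ⟨Set.univ, trivial, fun γ _ => ?_⟩
    by_contra! hcon
    have hf := eq_C_mul_X_sub_C_pow_add_C_of_forall_eval_eq hd0 (γ := γ) (z := 0)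
      fun x hx => by
        by_contra hx0
        exact hcon x trivial hx0 hx
    have hγ : f.eval 0 = γ := by
      simpa [zero_pow hd0.ne'] using congrArg (eval 0) hf
    exact hB (hγ ▸ hf)

end Polynomial

namespace RatFunc

theorem prod_zpow_algebraMap_eq_div {K ι : Type*} [Field K] (s : Finset ι) {p : ι → K[X]}
    (hp : ∀ i ∈ s, p i ≠ 0) (k : ι → ℤ) :
    ∏ i ∈ s, algebraMap K[X] (RatFunc K) (p i) ^ k i =
      algebraMap K[X] (RatFunc K) (∏ i ∈ s, p i ^ (k i).toNat) /
        algebraMap K[X] (RatFunc K) (∏ i ∈ s, p i ^ (-k i).toNat) := by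
  simp only [map_prod, map_pow, ← Finset.prod_div_distrib]
  refine Finset.prod_congr rfl fun i hi => ?_
  have hpi : algebraMap K[X] (RatFunc K) (p i) ≠ 0 := by simpa using hp i hi
  rw [← zpow_natCast, ← zpow_natCast, ← zpow_sub₀ hpi, Int.toNat_sub_toNat_neg]

theorem prod_zpow_algebraMap_ne_C {F K ι : Type*} [Field F] [Field K] [Algebra F K]
    {s : Finset ι} {p : ι → F[X]} (hp : ∀ i ∈ s, p i ≠ 0) {k : ι → ℤ} {m : ι} (hm : m ∈ s)
    (hkm : k m ≠ 0) {α : K} (hα : aeval α (p m) = 0)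
    (hα' : ∀ i ∈ s, i ≠ m → k i ≠ 0 → aeval α (p i) ≠ 0) (c : F) :
    ∏ i ∈ s, algebraMap F[X] (RatFunc F) (p i) ^ k i ≠ C c := by
  classical
  have hvanish : ∀ e : ι → ℕ, (∀ i, e i ≠ 0 → k i ≠ 0) →
      (aeval α (∏ i ∈ s, p i ^ e i) = 0 ↔ e m ≠ 0) := by
    intro e he
    simp only [map_prod, map_pow, Finset.prod_eq_zero_iff, pow_eq_zero_iff']
    constructor
    · rintro ⟨i, hi, hpi, hei⟩
      rcases eq_or_ne i m with rfl | him
      exacts [hei, absurd hpi (hα' i hi him (he i hei))]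
    · exact fun hem => ⟨m, hm, hα, hem⟩
  have hne : ∀ e : ι → ℕ, ∏ i ∈ s, p i ^ e i ≠ 0 := fun e =>
    Finset.prod_ne_zero_iff.2 fun i hi => pow_ne_zero _ (hp i hi)
  intro h
  rw [prod_zpow_algebraMap_eq_div s hp, div_eq_iff (algebraMap_ne_zero (hne _)),
    ← algebraMap_C, ← map_mul] at h
  have heval := congrArg (aeval α) (algebraMap_injective F h)
  rw [map_mul, aeval_C] at heval
  rcases hkm.lt_or_gt with hneg | hpos
  · have hN := (hvanish (fun i => (k i).toNat) fun i => by omega).not.2 (by omega)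
    have hD := (hvanish (fun i => (-k i).toNat) fun i => by omega).2 (by omega)
    exact hN (by rw [heval, hD, mul_zero])
  · have hN := (hvanish (fun i => (k i).toNat) fun i => by omega).2 (by omega)
    have hD := (hvanish (fun i => (-k i).toNat) fun i => by omega).not.2 (by omega)
    rw [hN, eq_comm, mul_eq_zero, or_iff_left hD, map_eq_zero_iff _ (algebraMap F K).injective]
      at heval
    refine hne (fun i => (k i).toNat) (algebraMap_injective F ?_)
    rw [h, heval, map_zero, zero_mul, map_zero]

end RatFunc

theorem stmt_13_general {F : Type*} [Field F] [CharZero F] (f : F[X]) (hd : 2 ≤ f.natDegree)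
    (hmono : ¬ ∃ (c : F) (e : ℕ), f = C c * X ^ e)
    (n : ℕ) (k : ℕ → ℤ) (hk : ∃ i ∈ Finset.Icc 1 n, k i ≠ 0) (c : F) :
    ∏ i ∈ Finset.Icc 1 n,
      (algebraMap F[X] (RatFunc F) ((fun p => f.comp p)^[i] X)) ^ (k i) ≠ RatFunc.C c := by
  classical
  set s := (Finset.Icc 1 n).filter (k · ≠ 0)
  have hs : s.Nonempty := let ⟨i, hi, hki⟩ := hk; ⟨i, Finset.mem_filter.2 ⟨hi, hki⟩⟩
  obtain ⟨hm, hkm⟩ := Finset.mem_filter.1 (s.max'_mem hs)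
  let fK := f.map (algebraMap F (AlgebraicClosure F))
  obtain ⟨S, hS0, hS⟩ := exists_zero_mem_and_forall_exists_ne_zero_eval_eq (f := fK)
    (by rwa [natDegree_map]) fun h => hmono (exists_eq_C_mul_X_pow_of_map (RingHom.injective _) h)
  obtain ⟨α, hαm, hαt⟩ := Function.exists_iterate_eq_and_iterate_ne_of_lt hS0 hS (s.max' hs)
  have haeval (i : ℕ) : aeval α ((fun p => f.comp p)^[i] X) = (fun x => fK.eval x)^[i] α := by
    simp [fK, aeval_def, eval_map]
  refine RatFunc.prod_zpow_algebraMap_ne_C (fun i _ => ?_) hm hkm (α := α)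
    (by rw [haeval]; exact hαm) (fun i hi him hki => ?_) c
  · refine ne_zero_of_natDegree_gt (n := 0) ?_
    rw [natDegree_iterate_comp, natDegree_X, mul_one]
    exact pow_pos (by omega) i
  · rw [haeval]
    exact hαt i ((s.le_max' i (Finset.mem_filter.2 ⟨hi, hki⟩)).lt_of_ne him)

/-- Let `F` have characteristic zero and `f ∈ F[X]` of degree at least `2`, not a monomial.
Then for every `n ≥ 1` the iterates `f^{(1)}, …, f^{(n)}` are multiplicatively independent
modulo constants: no product of them with integer exponents, not all zero, is a constant. -/
theorem stmt_13 {F : Type*} [Field F] [CharZero F] (f : F[X]) (hd : 2 ≤ f.natDegree)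
    (hmono : ¬ ∃ (c : F) (e : ℕ), f = C c * X ^ e)
    (n : ℕ) (hn : 1 ≤ n) (k : ℕ → ℤ) (hk : ∃ i ∈ Finset.Icc 1 n, k i ≠ 0) (c : F) :
    ∏ i ∈ Finset.Icc 1 n,
      (algebraMap F[X] (RatFunc F) ((fun p => f.comp p)^[i] X)) ^ (k i) ≠ RatFunc.C c :=
  stmt_13_general f hd hmono n k hk c
end
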